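/- Attainment of the maximal agreement set for stable sets: let H ⊆ L⁰(X)×L⁰ be a stable set, and for (x,t)∈L⁰(X)×L⁰ define A(x,t) = sup{A∈𝓕 : 1_A·(x,t) ∈ 1_A·H}, the essential supremum being taken in the measure algebra of (Ω,𝓕,μ). Then the supremum is attained: 1_{A(x,t)}·(x,t) ∈ 1_{A(x,t)}·H. -/

import Mathlib

/-!
Common setting: `(Ω, 𝓕, μ)` is a σ-finite measure space.  `L̄⁰` is formalized as
`Ω →ₘ[μ] EReal`, the space of a.e.-equivalence classes of (strongly a.e.) measurable
extended-real-valued functions, equipped with the pointwise a.e. order; `L⁰ = Ω →ₘ[μ] ℝ`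
and, for a Banach space `X`, `L⁰(X) = Ω →ₘ[μ] X` (a.e.-classes of strongly measurable
functions).  Suprema/infima in `L̄⁰` are essential suprema/infima, i.e. least upper /
greatest lower bounds for the a.e. order.
-/

open MeasureTheory Filter Set Topology Function
noncomputable section

namespace VecDual

variable {Ω : Type} [MeasurableSpace Ω] (μ : Measure Ω)

/-- coercion `L⁰ → L̄⁰` -/
def coeE (a : Ω →ₘ[μ] ℝ) : Ω →ₘ[μ] EReal := a.comp Real.toEReal continuous_coe_real_ereal

/-- negation on `L̄⁰` -/
def negE (e : Ω →ₘ[μ] EReal) : Ω →ₘ[μ] EReal := e.comp Neg.neg continuous_neg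

lemma cont_coe_sub : Continuous (Function.uncurry fun (r : ℝ) (v : EReal) => (r : EReal) + (-v)) := by
  have heq : (Function.uncurry fun (r : ℝ) (v : EReal) => (r : EReal) + (-v))
      = (fun q : EReal × EReal => q.1 + q.2) ∘ (fun p : ℝ × EReal => ((p.1 : EReal), -p.2)) := by
    funext p; rfl
  rw [heq]
  have h1 : Continuous fun p : ℝ × EReal => (((p.1 : EReal)), -p.2) :=
    (continuous_coe_real_ereal.comp continuous_fst).prodMk (continuous_neg.comp continuous_snd)
  rw [continuous_iff_continuousAt]
  intro p
  exact (EReal.continuousAt_add (Or.inl (by simp)) (Or.inl (by simp))).comp h1.continuousAt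

/-- `a - e` : subtraction of an extended value from a (finite) real value, in `L̄⁰` -/
def rsub (a : Ω →ₘ[μ] ℝ) (e : Ω →ₘ[μ] EReal) : Ω →ₘ[μ] EReal :=
  AEEqFun.comp₂ (fun (r : ℝ) (v : EReal) => (r : EReal) + (-v)) cont_coe_sub a e

/-- addition on `EReal` with the convention `(+∞) + (-∞) = +∞` -/
def pAdd (a b : EReal) : EReal := if a = ⊤ ∨ b = ⊤ then ⊤ else a + b

lemma measurable_pAdd : Measurable (Function.uncurry pAdd) := by
  have h : Function.uncurry pAdd = fun p : EReal × EReal =>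
      if p.1 = ⊤ ∨ p.2 = ⊤ then (⊤ : EReal) else
        if p.1 = ⊥ ∨ p.2 = ⊥ then (⊥ : EReal) else ((p.1.toReal + p.2.toReal : ℝ) : EReal) := by
    funext p
    rcases p with ⟨a, b⟩
    simp only [Function.uncurry, pAdd]
    induction a using EReal.rec <;> induction b using EReal.rec <;>
      simp [← EReal.coe_add]
  rw [h]
  apply Measurable.ite
  · exact (measurable_fst (measurableSet_singleton ⊤)).union
      (measurable_snd (measurableSet_singleton ⊤))
  · exact measurable_const
  apply Measurable.ite
  · exact (measurable_fst (measurableSet_singleton ⊥)).union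
      (measurable_snd (measurableSet_singleton ⊥))
  · exact measurable_const
  · exact measurable_coe_real_ereal.comp
      ((measurable_ereal_toReal.comp measurable_fst).add
        (measurable_ereal_toReal.comp measurable_snd))

/-- addition on `L̄⁰`, with the convention `(+∞) + (-∞) = +∞` -/
def addE (e₁ e₂ : Ω →ₘ[μ] EReal) : Ω →ₘ[μ] EReal :=
  AEEqFun.comp₂Measurable pAdd measurable_pAdd e₁ e₂

/-- essential supremum (least upper bound for the a.e. order) of a set in `L̄⁰` -/
def eSup (s : Set (Ω →ₘ[μ] EReal)) : Ω →ₘ[μ] EReal := by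
  classical exact if h : ∃ b, IsLUB s b then h.choose else AEEqFun.const Ω (⊤ : EReal)

/-- essential infimum (greatest lower bound for the a.e. order) of a set in `L̄⁰` -/
def eInf (s : Set (Ω →ₘ[μ] EReal)) : Ω →ₘ[μ] EReal := by
  classical exact if h : ∃ b, IsGLB s b then h.choose else AEEqFun.const Ω (⊤ : EReal)

/-- `t ∈ L⁰₊₊`, i.e. `t > 0` (a.e.) pointwise -/
def posL (t : Ω →ₘ[μ] ℝ) : Prop := ∀ᵐ ω ∂μ, 0 < t ω

/-- a countable measurable partition of `Ω` (up to null sets) -/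
def isPart (A : ℕ → Set Ω) : Prop :=
  (∀ n, MeasurableSet (A n)) ∧ Pairwise (Function.onFun Disjoint A) ∧ ∀ᵐ ω ∂μ, ∃ n, ω ∈ A n

/-- two classes agree a.e. on the set `A` -/
def agreeOn {γ : Type*} [TopologicalSpace γ] (f g : Ω →ₘ[μ] γ) (A : Set Ω) : Prop :=
  ∀ᵐ ω ∂μ, ω ∈ A → f ω = g ω

/-- the conditional Euclidean topology `τ` on `L⁰`, generated by the balls
`{a : |a - b| < t}`, `b ∈ L⁰`, `t ∈ L⁰₊₊` -/
def tauT : TopologicalSpace (Ω →ₘ[μ] ℝ) :=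
  .generateFrom {G | ∃ (b : Ω →ₘ[μ] ℝ) (t : Ω →ₘ[μ] ℝ), posL μ t ∧
    G = {a | ∀ᵐ ω ∂μ, |a ω - b ω| < t ω}}

section Pairing

variable {X Y : Type} [NormedAddCommGroup X] [NormedSpace ℝ X]
  [NormedAddCommGroup Y] [NormedSpace ℝ Y] (B : X →L[ℝ] Y →L[ℝ] ℝ)

/-- the extension of the duality pairing to `L⁰(X) × L⁰(Y) → L⁰`, computed pointwise a.e. -/
def pairL (x : Ω →ₘ[μ] X) (y : Ω →ₘ[μ] Y) : Ω →ₘ[μ] ℝ :=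
  AEEqFun.comp₂ (fun a b => B a b) B.continuous₂ x y

/-- the embedding of `X` into `L⁰(X)` by constant (deterministic) classes -/
def cst (x : X) : Ω →ₘ[μ] X := AEEqFun.const Ω x

/-- the weak topology `σ(X,Y)` on `X` induced by the pairing `B` -/
def weakT : TopologicalSpace X :=
  TopologicalSpace.induced (fun x => fun y => B x y) Pi.topologicalSpace

/-- `(X, Y, B)` is a dual pairing of Banach spaces as required: `|⟨x,y⟩| ≤ ‖x‖‖y‖`,
the pairing separates points, and norm-closed balls are weakly closed -/
structure IsDualPairing : Prop where
  bound : ∀ (x : X) (y : Y), |B x y| ≤ ‖x‖ * ‖y‖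
  sep_left : ∀ x : X, (∀ y : Y, B x y = 0) → x = 0
  sep_right : ∀ y : Y, (∀ x : X, B x y = 0) → y = 0
  closedBall_left : ∀ r : ℝ, IsClosed[weakT B] {x : X | ‖x‖ ≤ r}
  closedBall_right : ∀ r : ℝ, IsClosed[weakT B.flip] {y : Y | ‖y‖ ≤ r}

/-- a basic conditional weak neighborhood `V^t_{y₁,…,y_m}` of `0` in `L⁰(X)` -/
def basicN {m : ℕ} (ys : Fin m → Ω →ₘ[μ] Y) (t : Ω →ₘ[μ] ℝ) : Set (Ω →ₘ[μ] X) :=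
  {x | ∀ k, ∀ᵐ ω ∂μ, |pairL μ B x (ys k) ω| < t ω}

/-- the concatenations of basic neighborhoods along countable measurable partitions -/
def concatSets : Set (Set (Ω →ₘ[μ] X)) :=
  {C | ∃ (A : ℕ → Set Ω), isPart μ A ∧
    ∃ (m : ℕ → ℕ) (ys : ∀ n, Fin (m n) → Ω →ₘ[μ] Y) (ts : ℕ → Ω →ₘ[μ] ℝ),
      (∀ n, posL μ (ts n)) ∧
      C = {x | ∀ n, ∃ x' ∈ basicN μ B (ys n) (ts n), agreeOn μ x x' (A n)}}

/-- the conditional weak topology `σ(L⁰(X), L⁰(Y))`: the translates of the concatenations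
of basic neighborhoods form a local base at every point -/
def sigmaT : TopologicalSpace (Ω →ₘ[μ] X) :=
  .generateFrom {G | ∃ (x₀ : Ω →ₘ[μ] X) (C : Set (Ω →ₘ[μ] X)), C ∈ concatSets μ B ∧
    G = {x | x - x₀ ∈ C}}

/-- the product topology of `σ(L⁰(X),L⁰(Y))` and `τ` on `L⁰(X) × L⁰` -/
def sigTauT : TopologicalSpace ((Ω →ₘ[μ] X) × (Ω →ₘ[μ] ℝ)) :=
  @instTopologicalSpaceProd _ _ (sigmaT μ B) (tauT μ)

/-- membership in `L⁰_s(X)`: `x` is a step function subordinate to the partition `A`,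
with values `xs` -/
def stepMem (x : Ω →ₘ[μ] X) (A : ℕ → Set Ω) (xs : ℕ → X) : Prop :=
  ∀ n, agreeOn μ x (cst μ (xs n)) (A n)

/-- `L⁰_s(U)`: the set of step functions with values in `U ⊆ X` -/
def stepSet (U : Set X) : Set (Ω →ₘ[μ] X) :=
  {x | ∃ A xs, isPart μ A ∧ (∀ n, xs n ∈ U) ∧ stepMem μ x A xs}

/-- the epigraph of the step extension `F_s : L⁰_s(X) → L̄⁰` of `f : X → L̄⁰`, as a
subset of `L⁰(X) × L⁰` -/
def stepEpi (f : X → Ω →ₘ[μ] EReal) : Set ((Ω →ₘ[μ] X) × (Ω →ₘ[μ] ℝ)) :=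
  {p | ∃ A xs, isPart μ A ∧ stepMem μ p.1 A xs ∧
    ∀ n, ∀ᵐ ω ∂μ, ω ∈ A n → f (xs n) ω ≤ (p.2 ω : EReal)}

/-- `f : X → L̄⁰` is s-lower semi-continuous: the epigraph of its step extension is closed
in `L⁰_s(X) × L⁰` with respect to the (relative) product of `σ(L⁰(X),L⁰(Y))` and `τ` -/
def sLSC (f : X → Ω →ₘ[μ] EReal) : Prop :=
  @closure _ (sigTauT μ B) (stepEpi μ f) ∩ {p | p.1 ∈ stepSet μ (univ : Set X)} ⊆ stepEpi μ f

/-- `U ⊆ X` is s-closed: `L⁰_s(U)` is closed in `L⁰_s(X)` with respect to the relative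
`σ(L⁰(X),L⁰(Y))`-topology -/
def sClosed (U : Set X) : Prop :=
  @closure _ (sigmaT μ B) (stepSet μ U) ∩ stepSet μ (univ : Set X) ⊆ stepSet μ U

/-- `f : X → L̄⁰` is proper: `f > -∞` everywhere and `f(x₀) < +∞` for some `x₀` -/
def ProperV {E : Type*} (f : E → Ω →ₘ[μ] EReal) : Prop :=
  (∀ x : E, ∀ᵐ ω ∂μ, ⊥ < f x ω) ∧ ∃ x₀ : E, ∀ᵐ ω ∂μ, f x₀ ω < ⊤

/-- `f : X → L̄⁰` is convex -/
def ConvexV {E : Type*} [AddCommGroup E] [Module ℝ E] (f : E → Ω →ₘ[μ] EReal) : Prop :=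
  ∀ (x₁ x₂ : E) (r : ℝ), 0 ≤ r → r ≤ 1 →
    ∀ᵐ ω ∂μ, f (r • x₁ + (1 - r) • x₂) ω ≤
      (r : EReal) * f x₁ ω + ((1 - r : ℝ) : EReal) * f x₂ ω

/-- `x ∈ dom f`, i.e. `f(x) ∈ L⁰` -/
def memDom {E : Type*} (f : E → Ω →ₘ[μ] EReal) (x : E) : Prop :=
  ∀ᵐ ω ∂μ, f x ω ≠ ⊥ ∧ f x ω ≠ ⊤

/-- the conjugate `f* : L⁰(Y) → L̄⁰` of `f : X → L̄⁰`,
`f*(y) = sup_{x ∈ X} {⟨x,y⟩ - f(x)}` -/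
def conjS (f : X → Ω →ₘ[μ] EReal) (y : Ω →ₘ[μ] Y) : Ω →ₘ[μ] EReal :=
  eSup μ {e | ∃ x : X, e = rsub μ (pairL μ B (cst μ x) y) (f x)}

/-- the conditional conjugate `F* : L⁰(Y) → L̄⁰` of `F : L⁰(X) → L̄⁰`,
`F*(y) = sup_{x ∈ L⁰(X)} {⟨x,y⟩ - F(x)}` -/
def conjL (F : (Ω →ₘ[μ] X) → Ω →ₘ[μ] EReal) (y : Ω →ₘ[μ] Y) : Ω →ₘ[μ] EReal :=
  eSup μ {e | ∃ x : Ω →ₘ[μ] X, e = rsub μ (pairL μ B x y) (F x)}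

/-- the epigraph of a function `G : L⁰(Y) → L̄⁰`, as a subset of `L⁰(Y) × L⁰` -/
def epiL (G : (Ω →ₘ[μ] Y) → Ω →ₘ[μ] EReal) : Set ((Ω →ₘ[μ] Y) × (Ω →ₘ[μ] ℝ)) :=
  {p | ∀ᵐ ω ∂μ, G p.1 ω ≤ (p.2 ω : EReal)}

end Pairing

section SLB
variable {Y : Type} [NormedAddCommGroup Y] [NormedSpace ℝ Y]

/-- `(y,t)·1_A ∈ H·1_A` : the pair `(y,t)` agrees a.e. on `A` with some member of `H` -/
def memOn (H : Set ((Ω →ₘ[μ] Y) × (Ω →ₘ[μ] ℝ))) (y : Ω →ₘ[μ] Y) (t : Ω →ₘ[μ] ℝ)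
    (A : Set Ω) : Prop :=
  ∃ q ∈ H, agreeOn μ y q.1 A ∧ agreeOn μ t q.2 A

/-- the stable lower bound function `F_H : L⁰(Y) → L̄⁰` of a set `H ⊆ L⁰(Y) × L⁰`:
the localized infimum over all pairs `(t, A)` matching `H` at `y`, equal to `+∞`
where no matching is possible -/
def slb (H : Set ((Ω →ₘ[μ] Y) × (Ω →ₘ[μ] ℝ))) (y : Ω →ₘ[μ] Y) : Ω →ₘ[μ] EReal :=
  eInf μ {e | ∃ (t : Ω →ₘ[μ] ℝ) (A : Set Ω), MeasurableSet A ∧ memOn μ H y t A ∧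
    (∀ᵐ ω ∂μ, ω ∈ A → e ω = (t ω : EReal)) ∧ (∀ᵐ ω ∂μ, ω ∉ A → e ω = ⊤)}

end SLB

section Two
variable {X W Y Z : Type} [NormedAddCommGroup X] [NormedSpace ℝ X]
  [NormedAddCommGroup W] [NormedSpace ℝ W] [NormedAddCommGroup Y] [NormedSpace ℝ Y]
  [NormedAddCommGroup Z] [NormedSpace ℝ Z]

/-- the pairing of `X × W` with `Y × Z` : `⟨(x,w),(y,z)⟩ = ⟨x,y⟩ + ⟨w,z⟩` -/
def pairProd (B : X →L[ℝ] Y →L[ℝ] ℝ) (C : W →L[ℝ] Z →L[ℝ] ℝ) :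
    (X × W) →L[ℝ] (Y × Z) →L[ℝ] ℝ :=
  ((B.comp (ContinuousLinearMap.fst ℝ X W)).flip.comp (ContinuousLinearMap.fst ℝ Y Z)).flip +
    ((C.comp (ContinuousLinearMap.snd ℝ X W)).flip.comp (ContinuousLinearMap.snd ℝ Y Z)).flip

variable (B : X →L[ℝ] Y →L[ℝ] ℝ) (C : W →L[ℝ] Z →L[ℝ] ℝ)

/-- the conjugate `Φ* : L⁰(Y) × L⁰(Z) → L̄⁰` of a perturbation function `Φ : X × W → L̄⁰`:
`Φ*(y,z) = sup_{x ∈ X, w ∈ W} {⟨x,y⟩ + ⟨w,z⟩ - Φ(x,w)}` -/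
def conj2 (Φ : X × W → Ω →ₘ[μ] EReal) (y : Ω →ₘ[μ] Y) (z : Ω →ₘ[μ] Z) : Ω →ₘ[μ] EReal :=
  eSup μ {e | ∃ (x : X) (w : W),
    e = rsub μ (pairL μ B (cst μ x) y + pairL μ C (cst μ w) z) (Φ (x, w))}

/-- the epigraph of `Φ* : L⁰(Y) × L⁰(Z) → L̄⁰` -/
def epi2 (Φ : X × W → Ω →ₘ[μ] EReal) :
    Set ((Ω →ₘ[μ] Y) × (Ω →ₘ[μ] Z) × (Ω →ₘ[μ] ℝ)) :=
  {q | ∀ᵐ ω ∂μ, conj2 μ B C Φ q.1 q.2.1 ω ≤ (q.2.2 ω : EReal)}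

/-- the projection `pr_{L⁰(Y) × L⁰}` of the epigraph of `Φ*` -/
def prEpi2 (Φ : X × W → Ω →ₘ[μ] EReal) : Set ((Ω →ₘ[μ] Y) × (Ω →ₘ[μ] ℝ)) :=
  (fun q : (Ω →ₘ[μ] Y) × (Ω →ₘ[μ] Z) × (Ω →ₘ[μ] ℝ) => (q.1, q.2.2)) '' epi2 μ B C Φ

end Two


section Stability
variable {X : Type} [NormedAddCommGroup X]

/-- `F : L⁰(X) → L̄⁰` is stable (local): it is compatible with countable concatenations
along measurable partitions -/
def StableL (F : (Ω →ₘ[μ] X) → Ω →ₘ[μ] EReal) : Prop :=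
  ∀ (A : ℕ → Set Ω), isPart μ A → ∀ (x : ℕ → Ω →ₘ[μ] X) (g : Ω →ₘ[μ] X),
    (∀ n, agreeOn μ g (x n) (A n)) → ∀ n, agreeOn μ (F g) (F (x n)) (A n)

/-- a stable set `H ⊆ L⁰(X) × L⁰`: `H` is nonempty and closed under countable
concatenations along measurable partitions -/
def StableSet (H : Set ((Ω →ₘ[μ] X) × (Ω →ₘ[μ] ℝ))) : Prop :=
  H.Nonempty ∧ ∀ (p : ℕ → (Ω →ₘ[μ] X) × (Ω →ₘ[μ] ℝ)), (∀ n, p n ∈ H) →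
    ∀ (A : ℕ → Set Ω), isPart μ A → ∀ g : (Ω →ₘ[μ] X) × (Ω →ₘ[μ] ℝ),
      (∀ n, agreeOn μ g.1 (p n).1 (A n) ∧ agreeOn μ g.2 (p n).2 (A n)) → g ∈ H

end Stability

section Adjoint
variable {X W : Type} [NormedAddCommGroup X] [NormedSpace ℝ X]
  [NormedAddCommGroup W] [NormedSpace ℝ W]

/-- the (unique uniformly continuous) extension `A* : L⁰(W*) → L⁰(X*)` of the adjoint
`A* : W* → X*` of a bounded linear operator `A : X → W`; it acts pointwise a.e. and
satisfies `⟨x, A* w*⟩ = ⟨A x, w*⟩` -/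
def adjL (A : X →L[ℝ] W) (ws : Ω →ₘ[μ] StrongDual ℝ W) :
    Ω →ₘ[μ] StrongDual ℝ X :=
  ws.comp (fun φ => ((ContinuousLinearMap.compL ℝ X W ℝ).flip A) φ)
    ((ContinuousLinearMap.compL ℝ X W ℝ).flip A).continuous

end Adjoint

section Constrained
variable {X Y : Type} [NormedAddCommGroup X] [NormedSpace ℝ X]
  [NormedAddCommGroup Y] [NormedSpace ℝ Y]

open Classical in
/-- the function `f + δ_U : X → L̄⁰`, where `δ_U` is the (convex) indicator of `U ⊆ X` -/
def addIndicator (U : Set X) (f : X → Ω →ₘ[μ] EReal) : X → Ω →ₘ[μ] EReal :=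
  fun x => if x ∈ U then f x else AEEqFun.const Ω (⊤ : EReal)

/-- the support function `δ_U* : L⁰(Y) → L̄⁰` of `U ⊆ X`, `δ_U*(y) = sup_{x ∈ U} ⟨x,y⟩` -/
def suppF (B : X →L[ℝ] Y →L[ℝ] ℝ) (U : Set X) (y : Ω →ₘ[μ] Y) : Ω →ₘ[μ] EReal :=
  eSup μ {e | ∃ x ∈ U, e = coeE μ (pairL μ B (cst μ x) y)}

end Constrained

end VecDual

open MeasureTheory VecDual

variable {Ω : Type} [MeasurableSpace Ω]

/-!
The sets on which `(x, t)` can be matched by `H` are closed under countable unions: given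
matches `q n ∈ H` on `A n`, gluing the `q n` along a measurable partition subordinate to
`(A n)` gives an element of `H` by stability. Measuring these sets with a finite measure `ν ≫ μ`,
a countable union of a maximizing sequence is a largest such set up to null sets, so the
essential supremum `E` is contained in it up to a null set.
-/

theorem MeasureTheory.exists_measurableSet_ae_greatest (μ : Measure Ω) [SFinite μ]
    {P : Set Ω → Prop} (hP₀ : P ∅)
    (hP : ∀ A : ℕ → Set Ω, (∀ n, MeasurableSet (A n)) → (∀ n, P (A n)) → P (⋃ n, A n)) :
    ∃ S, MeasurableSet S ∧ P S ∧ ∀ A, MeasurableSet A → P A → μ (A \ S) = 0 := by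
  set 𝒜 := {A | MeasurableSet A ∧ P A}
  have hunion : ∀ {A B}, A ∈ 𝒜 → B ∈ 𝒜 → A ∪ B ∈ 𝒜 := fun {A B} hA hB => by
    have h := hP (fun n => Nat.casesOn n A fun _ => B) (fun n => by cases n; exacts [hA.1, hB.1])
      fun n => by cases n; exacts [hA.2, hB.2]
    simp only [← union_iUnion_nat_succ, iUnion_const] at h
    exact ⟨hA.1.union hB.1, h⟩
  set ν := μ.toFinite
  obtain ⟨u, -, hu, hu𝒜⟩ := exists_seq_tendsto_sSup (S := (ν ·) '' 𝒜)
    ⟨_, mem_image_of_mem _ ⟨.empty, hP₀⟩⟩ (OrderTop.bddAbove _)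
  choose A hA hνA using hu𝒜
  set S := ⋃ n, A n
  have hS : S ∈ 𝒜 := ⟨.iUnion fun n => (hA n).1, hP A (fun n => (hA n).1) fun n => (hA n).2⟩
  have hνS : sSup ((ν ·) '' 𝒜) ≤ ν S :=
    le_of_tendsto' hu fun n => hνA n ▸ measure_mono (subset_iUnion A n)
  refine ⟨S, hS.1, hS.2, fun B hB hPB => absolutelyContinuous_toFinite μ ?_⟩
  have hle : ν (B ∪ S) ≤ ν S := (le_sSup (mem_image_of_mem _ (hunion ⟨hB, hPB⟩ hS))).trans hνS
  rw [← union_sdiff_right, measure_sdiff subset_union_right hS.1.nullMeasurableSet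
    (measure_ne_top _ _), tsub_eq_zero_of_le hle]

namespace VecDual

section Gluing

variable {μ : Measure Ω} {γ : Type*} [TopologicalSpace γ]

theorem agreeOn_of_agreeOn_fiber {N : Ω → ℕ} {S : Set Ω} {A : ℕ → Set Ω}
    {x g : Ω →ₘ[μ] γ} {f : ℕ → Ω →ₘ[μ] γ} (hSA : ∀ ω ∈ S, ω ∈ A (N ω))
    (hx : ∀ n, agreeOn μ x (f n) (A n)) (hg : ∀ n, agreeOn μ g (f n) (N ⁻¹' {n})) :
    agreeOn μ x g S := by
  filter_upwards [ae_all_iff.2 hx, ae_all_iff.2 hg] with ω hxω hgω hω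
  rw [hxω _ (hSA ω hω), hgω _ rfl]

theorem exists_agreeOn_fiber [TopologicalSpace.PseudoMetrizableSpace γ] {ι : Type*}
    [Countable ι] [MeasurableSpace ι] [MeasurableSingletonClass ι] {N : Ω → ι}
    (hN : Measurable N) (f : ι → Ω →ₘ[μ] γ) :
    ∃ g : Ω →ₘ[μ] γ, ∀ i, agreeOn μ g (f i) (N ⁻¹' {i}) := by
  have hfib : ∀ i, MeasurableSet (N ⁻¹' {i}) := fun i => hN (measurableSet_singleton i)
  have hglue : AEStronglyMeasurable (fun ω => f (N ω) ω) μ := by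
    have hpieces := (aestronglyMeasurable_iUnion_iff (μ := μ) (f := fun ω => f (N ω) ω)
      (s := fun i => N ⁻¹' {i})).2 fun i => (f i).aestronglyMeasurable.restrict.congr <| by
        filter_upwards [ae_restrict_mem (hfib i)] with ω hω
        rw [show N ω = i from hω]
    rwa [iUnion_eq_univ_iff.2 fun ω => ⟨N ω, rfl⟩, Measure.restrict_univ] at hpieces
  refine ⟨AEEqFun.mk _ hglue, fun i => ?_⟩
  filter_upwards [AEEqFun.coeFn_mk _ hglue] with ω hω hωi
  rw [hω, show N ω = i from hωi]

theorem isPart_fiber {N : Ω → ℕ} (hN : Measurable N) : isPart μ fun n => N ⁻¹' {n} :=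
  ⟨fun n => hN (measurableSet_singleton n), pairwise_disjoint_fiber N,
    .of_forall fun ω => ⟨N ω, rfl⟩⟩

end Gluing

section StableSet

variable {μ : Measure Ω} {X : Type} [NormedAddCommGroup X]
  {H : Set ((Ω →ₘ[μ] X) × (Ω →ₘ[μ] ℝ))} {x : Ω →ₘ[μ] X} {t : Ω →ₘ[μ] ℝ}

theorem StableSet.exists_agreeOn_fiber (hH : StableSet μ H) {N : Ω → ℕ} (hN : Measurable N)
    {q : ℕ → (Ω →ₘ[μ] X) × (Ω →ₘ[μ] ℝ)} (hq : ∀ n, q n ∈ H) :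
    ∃ g ∈ H, ∀ n, agreeOn μ g.1 (q n).1 (N ⁻¹' {n}) ∧ agreeOn μ g.2 (q n).2 (N ⁻¹' {n}) := by
  obtain ⟨g₁, hg₁⟩ := VecDual.exists_agreeOn_fiber hN fun n => (q n).1
  obtain ⟨g₂, hg₂⟩ := VecDual.exists_agreeOn_fiber hN fun n => (q n).2
  exact ⟨(g₁, g₂), hH.2 q hq _ (isPart_fiber hN) _ fun n => ⟨hg₁ n, hg₂ n⟩,
    fun n => ⟨hg₁ n, hg₂ n⟩⟩

theorem memOn_empty (hH : StableSet μ H) : memOn μ H x t ∅ :=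
  let ⟨q, hq⟩ := hH.1
  ⟨q, hq, .of_forall fun _ h => h.elim, .of_forall fun _ h => h.elim⟩

theorem memOn_iUnion (hH : StableSet μ H) {A : ℕ → Set Ω} (hA : ∀ n, MeasurableSet (A n))
    (h : ∀ n, memOn μ H x t (A n)) : memOn μ H x t (⋃ n, A n) := by
  classical
  choose q hqH hqx hqt using h
  have hcover : ∀ ω, ∃ n, ω ∈ A n ∪ (⋃ k, A k)ᶜ := fun ω =>
    (em (ω ∈ ⋃ k, A k)).elim (fun h => (mem_iUnion.1 h).imp fun _ => Or.inl)
      fun h => ⟨0, Or.inr h⟩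
  have hN : Measurable fun ω => Nat.find (hcover ω) :=
    measurable_find hcover fun n => (hA n).union (MeasurableSet.iUnion hA).compl
  have hAN : ∀ ω ∈ ⋃ k, A k, ω ∈ A (Nat.find (hcover ω)) := fun ω hω =>
    (Nat.find_spec (hcover ω)).resolve_right (not_not.2 hω)
  obtain ⟨g, hgH, hg⟩ := hH.exists_agreeOn_fiber hN hqH
  exact ⟨g, hgH, agreeOn_of_agreeOn_fiber hAN hqx fun n => (hg n).1,
    agreeOn_of_agreeOn_fiber hAN hqt fun n => (hg n).2⟩

theorem memOn.of_measure_sdiff_eq_zero {A B : Set Ω} (h : memOn μ H x t A) (hBA : μ (B \ A) = 0) :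
    memOn μ H x t B := by
  obtain ⟨q, hq, hx, ht⟩ := h
  have hB : ∀ᵐ ω ∂μ, ω ∈ B → ω ∈ A := ae_le_set.2 hBA
  exact ⟨q, hq, by filter_upwards [hx, hB] with ω h h' hω using h (h' hω),
    by filter_upwards [ht, hB] with ω h h' hω using h (h' hω)⟩

end StableSet

end VecDual

theorem stable_agreement_attained_general {Ω : Type} [MeasurableSpace Ω] (μ : Measure Ω) [SigmaFinite μ]
    {X : Type}
    [NormedAddCommGroup X]
    (H : Set ((Ω →ₘ[μ] X) × (Ω →ₘ[μ] ℝ))) (hH : StableSet μ H)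
    (x : Ω →ₘ[μ] X) (t : Ω →ₘ[μ] ℝ)
    (E : Set Ω)
    (hlub : ∀ E' : Set Ω, MeasurableSet E' →
      (∀ A : Set Ω, MeasurableSet A → memOn μ H x t A → μ (A \ E') = 0) →
      μ (E \ E') = 0) :
    memOn μ H x t E := by
  obtain ⟨S, hS, hSmem, hSmax⟩ := exists_measurableSet_ae_greatest μ (memOn_empty hH)
    fun _ => memOn_iUnion hH
  exact hSmem.of_measure_sdiff_eq_zero (hlub S hS hSmax)

/-- attainment of the maximal agreement set for stable sets:
let `H ⊆ L⁰(X) × L⁰` be a stable set and `(x,t) ∈ L⁰(X) × L⁰`.  If `E` is the essential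
supremum (in the measure algebra) of the family of measurable sets `A` with
`1_A·(x,t) ∈ 1_A·H`, then the supremum is attained: `1_E·(x,t) ∈ 1_E·H`. -/
theorem stable_agreement_attained {Ω : Type} [MeasurableSpace Ω] (μ : Measure Ω) [SigmaFinite μ]
    {X Y : Type}
    [NormedAddCommGroup X] [NormedSpace ℝ X] [CompleteSpace X]
    [NormedAddCommGroup Y] [NormedSpace ℝ Y] [CompleteSpace Y]
    {B : X →L[ℝ] Y →L[ℝ] ℝ} (hB : IsDualPairing B)
    (H : Set ((Ω →ₘ[μ] X) × (Ω →ₘ[μ] ℝ))) (hH : StableSet μ H)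
    (x : Ω →ₘ[μ] X) (t : Ω →ₘ[μ] ℝ)
    (E : Set Ω) (hE : MeasurableSet E)
    (hub : ∀ A : Set Ω, MeasurableSet A → memOn μ H x t A → μ (A \ E) = 0)
    (hlub : ∀ E' : Set Ω, MeasurableSet E' →
      (∀ A : Set Ω, MeasurableSet A → memOn μ H x t A → μ (A \ E') = 0) →
      μ (E \ E') = 0) :
    memOn μ H x t E :=
  stable_agreement_attained_general μ H hH x t E hlub
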